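/- Let d ≥ 1 and 0 < r < 1. There exists a constant C < ∞, depending only on d and r, such that for every function f of class C¹ on (−r,r) × B_{d−1} and every b ∈ ℝ∖{0}: |∫_{B_{d−1}} ∫_{−r}^{r} f(x,y)/(ib − x) dx d^{d−1}y| ≤ C·‖f‖_{C¹}. -/

import Mathlib

/-
As `b → 0` the kernel `1 / (i b - x)` tends to the principal value `-1 / x`, and its cancellation
gives a bound uniform in `b`: the real part `-x / (x² + b²)` is odd and the imaginary part
integrates to `-2 arctan (r / b)`, so `‖∫_{-r}^{r} dx / (i b - x)‖ ≤ π`. Splitting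
`f (x, y) = f (0, y) + (f (x, y) - f (0, y))`, the first term thus contributes at most `π ‖f‖_{C¹}`,
while the second is at most `‖∂ₓ f‖_∞ |x|` by the mean value theorem, and `|x| ≤ |i b - x|`.
Integrating over `y` gives `C = (π + 2 r) |B_{d-1}|`.
-/

open MeasureTheory Complex Real
open scoped ENNReal

noncomputable section

namespace LatSch

/-- The lattice `Γ = ℤ^d`. -/
abbrev Γd (d : ℕ) := Fin d → ℤ

/-- The Hilbert space `ℓ²(Γ)`. -/
abbrev L2 (d : ℕ) := lp (fun _ : Γd d => ℂ) 2

/-- Euclidean norm of a lattice point. -/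
def lnorm {d : ℕ} (x : Γd d) : ℝ := Real.sqrt (∑ i, ((x i : ℝ)) ^ 2)

/-- The standard basis vector `δ_x` of `ℓ²(Γ)`. -/
def delta {d : ℕ} (x : Γd d) : L2 d := lp.single 2 x 1

local notation "⟪" a ", " b "⟫" => @inner ℂ _ _ a b

/-- The cube `[-π, π]^d`, a fundamental domain of the torus. -/
def torusBox (d : ℕ) : Set (Fin d → ℝ) := Set.univ.pi fun _ => Set.Icc (-π) π

/-- `⟨p, m⟩` for `p ∈ ℝ^d`, `m ∈ ℤ^d`. -/
def dotZ {d : ℕ} (p : Fin d → ℝ) (m : Γd d) : ℝ := ∑ i, p i * (m i : ℝ)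

/-- Fourier coefficient `f̂(m) = (2π)^{-d} ∫_{[-π,π]^d} f(p) e^{i⟨p,m⟩} dp`. -/
def fCoeff {d : ℕ} (f : (Fin d → ℝ) → ℝ) (m : Γd d) : ℂ :=
  ((1 / (2 * π) ^ d : ℝ) : ℂ) *
    ∫ p in torusBox d, (f p : ℂ) * Complex.exp (Complex.I * (dotZ p m : ℝ))

/-- `H` is the Fourier multiplier (hopping matrix) `h(f)`, characterized by its
matrix elements `⟨δ_x, H δ_y⟩ = f̂(x - y)`. -/
def IsMultiplier {d : ℕ} (f : (Fin d → ℝ) → ℝ) (H : L2 d →L[ℂ] L2 d) : Prop :=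
  ∀ x y : Γd d, ⟪delta x, H (delta y)⟫ = fCoeff f (x - y)

/-- `M` is the operator of multiplication by the potential `V`. -/
def IsMulOp {d : ℕ} (V : Γd d → ℝ) (M : L2 d →L[ℂ] L2 d) : Prop :=
  ∀ (ψ : L2 d) (x : Γd d), (M ψ : ∀ _ : Γd d, ℂ) x = (V x : ℂ) * (ψ : ∀ _ : Γd d, ℂ) x

/-- Partial derivative `∂_{p_k} f (p)`. -/
def pd {d : ℕ} (f : (Fin d → ℝ) → ℝ) (k : Fin d) (p : Fin d → ℝ) : ℝ :=
  fderiv ℝ f p (Pi.single k 1)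

/-- `|∇f|²(p) = Σ_k (∂_{p_k} f(p))²`. -/
def gradSq {d : ℕ} (f : (Fin d → ℝ) → ℝ) (p : Fin d → ℝ) : ℝ := ∑ k, pd f k p ^ 2

/-- The Hessian matrix of `f` at `p`. -/
def hess {d : ℕ} (f : (Fin d → ℝ) → ℝ) (p : Fin d → ℝ) : Matrix (Fin d) (Fin d) ℝ :=
  Matrix.of fun i j => fderiv ℝ (fun q => fderiv ℝ f q (Pi.single j 1)) p (Pi.single i 1)

/-- All critical points of `f` are nondegenerate (`f` is a Morse function). -/
def IsMorse {d : ℕ} (f : (Fin d → ℝ) → ℝ) : Prop :=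
  ∀ p, fderiv ℝ f p = 0 → (hess f p).det ≠ 0

/-- `2πℤ^d`-periodicity. -/
def Periodic2pi {d : ℕ} (f : (Fin d → ℝ) → ℝ) : Prop :=
  ∀ (p : Fin d → ℝ) (m : Γd d), f (p + fun i => 2 * π * (m i : ℝ)) = f p

/-- A dispersion relation: a `2πℤ^d`-periodic function with minimum `0`. -/
def IsDispersion {d : ℕ} (f : (Fin d → ℝ) → ℝ) : Prop :=
  Periodic2pi f ∧ (∀ p, 0 ≤ f p) ∧ (∃ p, f p = 0)

/-- Condition (M): `𝔢` and `|∇𝔢|²` are Morse functions. -/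
def CondM {d : ℕ} (f : (Fin d → ℝ) → ℝ) : Prop := IsMorse f ∧ IsMorse (gradSq f)

/-- `Φ_{m,n}(V) = (Σ_x |V(x)|^{1/m} (1+|x|)^n)^m`, valued in `[0,∞]`. -/
def Phi {d : ℕ} (m n : ℕ) (V : Γd d → ℝ) : ℝ≥0∞ :=
  (∑' x : Γd d, ENNReal.ofReal (|V x| ^ ((1 : ℝ) / m) * (1 + lnorm x) ^ n)) ^ m

/-- The set of eigenvectors of `H` (with real eigenvalue). -/
def eigvecs {d : ℕ} (H : L2 d →L[ℂ] L2 d) : Set (L2 d) :=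
  {ψ : L2 d | ψ ≠ 0 ∧ ∃ μ : ℝ, H ψ = (μ : ℂ) • ψ}

/-- `N_pp[H]`: the Hilbert-space dimension of the closed linear span of all
eigenvectors of `H`. -/
def Npp {d : ℕ} (H : L2 d →L[ℂ] L2 d) : Cardinal :=
  Module.rank ℂ ((Submodule.span ℂ (eigvecs H)).topologicalClosure)

/-- The Fourier transform `ĝ_x(p) = (i/2·|∇𝔢(p)|² + ⟨∇𝔢(p), x⟩) e^{-i⟨p,x⟩}`. -/
def ghat {d : ℕ} (e : (Fin d → ℝ) → ℝ) (x : Γd d) (p : Fin d → ℝ) : ℂ :=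
  ((Complex.I / 2) * ((gradSq e p : ℝ) : ℂ) + ((∑ k, pd e k p * (x k : ℝ) : ℝ) : ℂ)) *
    Complex.exp (-(Complex.I * (dotZ p x : ℝ)))

/-- `g : Γ → ℓ²(Γ)` is the family of vectors `g_x` with Fourier transform `ĝ_x`. -/
def IsGVec {d : ℕ} (e : (Fin d → ℝ) → ℝ) (g : Γd d → L2 d) : Prop :=
  ∀ x m : Γd d,
    (g x : ∀ _ : Γd d, ℂ) m =
      ((1 / (2 * π) ^ d : ℝ) : ℂ) *
        ∫ p in torusBox d, ghat e x p * Complex.exp (Complex.I * (dotZ p m : ℝ))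

/-- `C` is the bounded self-adjoint realization
`C_V = Σ_x i V(x) (|δ_x⟩⟨g_x| - |g_x⟩⟨δ_x|)` of the commutator `i[V, A(𝔢)]`. -/
def IsCommOp {d : ℕ} (V : Γd d → ℝ) (g : Γd d → L2 d) (C : L2 d →L[ℂ] L2 d) : Prop :=
  ∀ ψ : L2 d,
    HasSum (fun x : Γd d =>
      (Complex.I * (V x : ℂ)) • (⟪g x, ψ⟫ • delta x - ⟪delta x, ψ⟫ • g x)) (C ψ)

/-- `R` is the resolvent `(z - H)^{-1}`. -/
def IsResolventAt {d : ℕ} (H : L2 d →L[ℂ] L2 d) (z : ℂ) (R : L2 d →L[ℂ] L2 d) : Prop :=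
  R.comp (z • (1 : L2 d →L[ℂ] L2 d) - H) = 1 ∧ (z • (1 : L2 d →L[ℂ] L2 d) - H).comp R = 1

/-- `‖f‖_{C^m} ≤ C`: all partial derivatives of order `≤ m` are bounded by `C`. -/
def CmNormLe {d : ℕ} (m : ℕ) (f : (Fin d → ℝ) → ℝ) (C : ℝ) : Prop :=
  ∀ j : ℕ, j ≤ m → ∀ (p : Fin d → ℝ) (k : Fin j → Fin d),
    |iteratedFDeriv ℝ j f p (fun i => Pi.single (k i) 1)| ≤ C

/-- `K(𝔢) ≥ K`: at every critical point, every eigenvalue `λ` of the Hessian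
satisfies `|λ|^{1/2} ≥ K`. -/
def MinCurvGe {d : ℕ} (f : (Fin d → ℝ) → ℝ) (K : ℝ) : Prop :=
  ∀ p, fderiv ℝ f p = 0 → ∀ (lam : ℝ) (v : Fin d → ℝ), v ≠ 0 →
    (hess f p).mulVec v = lam • v → K ^ 2 ≤ |lam|

/-- The set of thresholds `Thr(𝔢) = 𝔢(Crit(𝔢))`. -/
def Thr {d : ℕ} (f : (Fin d → ℝ) → ℝ) : Set ℝ := f '' {p | fderiv ℝ f p = 0}


/-- The number of strictly negative eigenvalues of `C`, counted with multiplicity: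
the dimension of the span of eigenvectors with strictly negative eigenvalue. -/
def NegCount {d : ℕ} (C : L2 d →L[ℂ] L2 d) : Cardinal :=
  Module.rank ℂ (Submodule.span ℂ
    {ψ : L2 d | ψ ≠ 0 ∧ ∃ μ : ℝ, μ < 0 ∧ C ψ = (μ : ℂ) • ψ})

/-- The number of strictly positive eigenvalues of `C`, counted with multiplicity. -/
def PosCount {d : ℕ} (C : L2 d →L[ℂ] L2 d) : Cardinal :=
  Module.rank ℂ (Submodule.span ℂ
    {ψ : L2 d | ψ ≠ 0 ∧ ∃ μ : ℝ, 0 < μ ∧ C ψ = (μ : ℂ) • ψ})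

open Set
open scoped NNReal

theorem I_mul_ofReal_sub_ofReal_ne_zero {b : ℝ} (hb : b ≠ 0) (x : ℝ) : I * b - x ≠ 0 :=
  fun h => hb (by simpa using congrArg Complex.im h)

theorem hasDerivAt_log_sub_arctan_mul_I {b : ℝ} (hb : b ≠ 0) (x : ℝ) :
    HasDerivAt
      (fun x : ℝ => ((-Real.log (x ^ 2 + b ^ 2) / 2 : ℝ) : ℂ) - (Real.arctan (x / b) : ℂ) * I)
      (1 / (I * b - x)) x := by
  have hpos : 0 < x ^ 2 + b ^ 2 := by positivity
  have hlog :
      HasDerivAt (fun x : ℝ => -Real.log (x ^ 2 + b ^ 2) / 2) (-x / (x ^ 2 + b ^ 2)) x := by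
    refine (((hasDerivAt_pow 2 x).add_const _).log hpos.ne').neg.div_const 2 |>.congr_deriv ?_
    field_simp
    ring
  have harctan : HasDerivAt (fun x : ℝ => Real.arctan (x / b)) (b / (x ^ 2 + b ^ 2)) x := by
    refine ((hasDerivAt_id' x).div_const b).arctan.congr_deriv ?_
    field_simp
    ring
  have hden : (x : ℂ) ^ 2 + (b : ℂ) ^ 2 ≠ 0 := by exact_mod_cast hpos.ne'
  refine (hlog.ofReal_comp.sub (harctan.ofReal_comp.mul_const I)).congr_deriv ?_
  rw [eq_div_iff (I_mul_ofReal_sub_ofReal_ne_zero hb x)]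
  push_cast
  field_simp
  ring_nf
  rw [I_sq]
  ring

theorem integral_one_div_I_mul_sub {b : ℝ} (hb : b ≠ 0) (r : ℝ) :
    ∫ x in -r..r, 1 / (I * b - x) = -2 * Real.arctan (r / b) * I := by
  have hcont : Continuous fun x : ℝ => 1 / (I * b - x) :=
    continuous_const.div (by fun_prop) (I_mul_ofReal_sub_ofReal_ne_zero hb)
  rw [intervalIntegral.integral_eq_sub_of_hasDerivAt
    (fun x _ => hasDerivAt_log_sub_arctan_mul_I hb x) (hcont.intervalIntegrable _ _)]
  simp only [neg_sq, neg_div, Real.arctan_neg]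
  push_cast
  ring

theorem norm_integral_one_div_I_mul_sub_le {b : ℝ} (hb : b ≠ 0) (r : ℝ) :
    ‖∫ x in -r..r, 1 / (I * b - x)‖ ≤ π := by
  rw [integral_one_div_I_mul_sub hb, norm_mul, norm_I, mul_one, norm_mul, norm_neg,
    norm_real, Real.norm_eq_abs, RCLike.norm_ofNat, ← le_div_iff₀' two_pos, abs_le]
  constructor <;>
    linarith [Real.arctan_lt_pi_div_two (r / b), Real.neg_pi_div_two_lt_arctan (r / b)]

theorem norm_ofReal_div_I_mul_sub_le {a b x : ℝ} {K : ℝ≥0} (hb : b ≠ 0) (ha : |a| ≤ K * |x|) :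
    ‖(a : ℂ) / (I * b - x)‖ ≤ K := by
  have hx : |x| ≤ ‖I * b - x‖ := by simpa using abs_re_le_norm (I * b - x)
  rw [norm_div, norm_real, Real.norm_eq_abs,
    div_le_iff₀ (norm_pos_iff.2 (I_mul_ofReal_sub_ofReal_ne_zero hb x))]
  exact ha.trans (by gcongr)

theorem norm_setIntegral_div_I_mul_sub_le {g : ℝ → ℝ} {K : ℝ≥0} {r b : ℝ} (hr : 0 < r)
    (hb : b ≠ 0) (hg : LipschitzOnWith K g (Ioo (-r) r)) :
    ‖∫ x in Ioo (-r) r, (g x : ℂ) / (I * b - x)‖ ≤ π * |g 0| + 2 * r * K := by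
  have hden := I_mul_ofReal_sub_ofReal_ne_zero hb
  have hdiff_le : ∀ x ∈ Ioo (-r) r, ‖((g x - g 0 : ℝ) : ℂ) / (I * b - x)‖ ≤ K := fun x hx =>
    norm_ofReal_div_I_mul_sub_le hb <| by
      simpa [Real.dist_eq] using hg.dist_le_mul x hx 0 ⟨neg_lt_zero.2 hr, hr⟩
  have hdiff_int :
      IntegrableOn (fun x : ℝ => ((g x - g 0 : ℝ) : ℂ) / (I * b - x)) (Ioo (-r) r) :=
    .of_bound measure_Ioo_lt_top
      ((continuous_ofReal.comp_continuousOn (hg.continuousOn.sub continuousOn_const)).div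
        (by fun_prop) (fun x _ => hden x) |>.aestronglyMeasurable measurableSet_Ioo) K
      ((ae_restrict_iff' measurableSet_Ioo).2 (.of_forall hdiff_le))
  have hconst_int : IntegrableOn (fun x : ℝ => (g 0 : ℂ) * (1 / (I * b - x))) (Ioo (-r) r) :=
    (continuous_const.mul (continuous_const.div (by fun_prop) hden)).integrableOn_Icc.mono_set
      Ioo_subset_Icc_self
  have hsplit : ∀ x : ℝ, (g x : ℂ) / (I * b - x) =
      ((g x - g 0 : ℝ) : ℂ) / (I * b - x) + (g 0 : ℂ) * (1 / (I * b - x)) := fun x => by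
    push_cast
    ring
  have hconst : ∫ x in Ioo (-r) r, (g 0 : ℂ) * (1 / (I * b - x)) =
      (g 0 : ℂ) * ∫ x in -r..r, 1 / (I * b - x) := by
    rw [integral_const_mul, intervalIntegral.integral_of_le (by linarith),
      integral_Ioc_eq_integral_Ioo]
  simp_rw [hsplit]
  rw [integral_add hdiff_int hconst_int, hconst]
  calc _ ≤ ‖∫ x in Ioo (-r) r, ((g x - g 0 : ℝ) : ℂ) / (I * b - x)‖ +
        ‖(g 0 : ℂ)‖ * ‖∫ x in -r..r, 1 / (I * b - x)‖ :=
        (norm_add_le _ _).trans_eq (by rw [norm_mul])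
    _ ≤ K * volume.real (Ioo (-r) r) + |g 0| * π := by
        rw [norm_real, Real.norm_eq_abs]
        gcongr
        · exact norm_setIntegral_le_of_norm_le_const measure_Ioo_lt_top hdiff_le
        · exact norm_integral_one_div_I_mul_sub_le hb r
    _ = π * |g 0| + 2 * r * K := by
        rw [Real.volume_real_Ioo_of_le (by linarith)]
        ring

theorem lipschitzOnWith_slice_of_nnnorm_fderivWithin_le {F G : Type*} [NormedAddCommGroup F]
    [NormedSpace ℝ F] [NormedAddCommGroup G] [NormedSpace ℝ G] {f : ℝ × F → G}
    {S : Set (ℝ × F)} {J : Set ℝ} {y : F} {K : ℝ≥0} (hS : IsOpen S)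
    (hf : DifferentiableOn ℝ f S) (hJ : Convex ℝ J) (hJS : ∀ t ∈ J, (t, y) ∈ S)
    (hK : ∀ t ∈ J, ‖fderivWithin ℝ f S (t, y) (1, 0)‖₊ ≤ K) :
    LipschitzOnWith K (fun t => f (t, y)) J := by
  refine hJ.lipschitzOnWith_of_nnnorm_hasDerivWithin_le (fun t ht => ?_) hK
  have hft : HasFDerivAt f (fderivWithin ℝ f S (t, y)) (t, y) := by
    rw [fderivWithin_of_isOpen hS (hJS t ht)]
    exact (hf.differentiableAt (hS.mem_nhds (hJS t ht))).hasFDerivAt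
  exact
    (hft.comp_hasDerivAt t ((hasDerivAt_id t).prodMk (hasDerivAt_const t y))).hasDerivWithinAt

theorem statement16_general (d : ℕ) (r : ℝ) (hr0 : 0 < r) :
    ∃ c : ℝ, ∀ (f : ℝ × EuclideanSpace ℝ (Fin (d - 1)) → ℝ) (M : ℝ) (b : ℝ), b ≠ 0 →
      ContDiffOn ℝ 1 f
        (Set.Ioo (-r) r ×ˢ Metric.ball (0 : EuclideanSpace ℝ (Fin (d - 1))) r) →
      (∀ q ∈ Set.Ioo (-r) r ×ˢ Metric.ball (0 : EuclideanSpace ℝ (Fin (d - 1))) r,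
        |f q| ≤ M) →
      (∀ q ∈ Set.Ioo (-r) r ×ˢ Metric.ball (0 : EuclideanSpace ℝ (Fin (d - 1))) r,
        |fderivWithin ℝ f
            (Set.Ioo (-r) r ×ˢ Metric.ball (0 : EuclideanSpace ℝ (Fin (d - 1))) r) q
            (1, 0)| ≤ M) →
      (∀ q ∈ Set.Ioo (-r) r ×ˢ Metric.ball (0 : EuclideanSpace ℝ (Fin (d - 1))) r,
        ∀ i : Fin (d - 1),
          |fderivWithin ℝ f
              (Set.Ioo (-r) r ×ˢ Metric.ball (0 : EuclideanSpace ℝ (Fin (d - 1))) r) q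
              (0, EuclideanSpace.single i 1)| ≤ M) →
      ‖∫ y in Metric.ball (0 : EuclideanSpace ℝ (Fin (d - 1))) r,
          ∫ x in Set.Ioo (-r) r, (f (x, y) : ℂ) / (Complex.I * (b : ℂ) - (x : ℂ))‖ ≤
        c * M := by
  refine ⟨(π + 2 * r) * volume.real (Metric.ball (0 : EuclideanSpace ℝ (Fin (d - 1))) r), ?_⟩
  intro f M b hb hf hfM hfx _
  have hS : IsOpen (Ioo (-r) r ×ˢ Metric.ball (0 : EuclideanSpace ℝ (Fin (d - 1))) r) :=
    isOpen_Ioo.prod Metric.isOpen_ball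
  have h0 : (0 : ℝ) ∈ Ioo (-r) r := ⟨neg_lt_zero.2 hr0, hr0⟩
  have hM : 0 ≤ M := (abs_nonneg _).trans (hfM (0, 0) ⟨h0, Metric.mem_ball_self hr0⟩)
  have hslice : ∀ y ∈ Metric.ball (0 : EuclideanSpace ℝ (Fin (d - 1))) r,
      ‖∫ x in Ioo (-r) r, (f (x, y) : ℂ) / (I * b - x)‖ ≤ (π + 2 * r) * M := by
    intro y hy
    have hlip : LipschitzOnWith M.toNNReal (fun x => f (x, y)) (Ioo (-r) r) :=
      lipschitzOnWith_slice_of_nnnorm_fderivWithin_le hS (hf.differentiableOn one_ne_zero)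
        (convex_Ioo _ _) (fun t ht => ⟨ht, hy⟩) fun t ht => by
          rw [← NNReal.coe_le_coe, coe_nnnorm, Real.coe_toNNReal _ hM]
          exact hfx _ ⟨ht, hy⟩
    calc _ ≤ π * |f (0, y)| + 2 * r * M.toNNReal :=
          norm_setIntegral_div_I_mul_sub_le hr0 hb hlip
      _ ≤ π * M + 2 * r * M := by
          rw [Real.coe_toNNReal _ hM]
          gcongr
          exact hfM _ ⟨h0, hy⟩
      _ = (π + 2 * r) * M := by ring
  calc _ ≤ (π + 2 * r) * M *
        volume.real (Metric.ball (0 : EuclideanSpace ℝ (Fin (d - 1))) r) :=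
        norm_setIntegral_le_of_norm_le_const measure_ball_lt_top hslice
    _ = _ := by ring

/-- Lemma 1: one-dimensional singularity.
For `d ≥ 1` and `0 < r < 1` there is `C < ∞`, depending only on `d` and `r`, such that
for every `C¹` function `f` on `(-r,r) × B_{d-1}` with `‖f‖_{C¹} ≤ M` and every
`b ≠ 0`: `|∫_{B_{d-1}} ∫_{-r}^r f(x,y)/(ib - x) dx dy| ≤ C M`. -/
theorem statement16 (d : ℕ) (hd : 1 ≤ d) (r : ℝ) (hr0 : 0 < r) (hr1 : r < 1) :
    ∃ c : ℝ, ∀ (f : ℝ × EuclideanSpace ℝ (Fin (d - 1)) → ℝ) (M : ℝ) (b : ℝ), b ≠ 0 →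
      ContDiffOn ℝ 1 f
        (Set.Ioo (-r) r ×ˢ Metric.ball (0 : EuclideanSpace ℝ (Fin (d - 1))) r) →
      (∀ q ∈ Set.Ioo (-r) r ×ˢ Metric.ball (0 : EuclideanSpace ℝ (Fin (d - 1))) r,
        |f q| ≤ M) →
      (∀ q ∈ Set.Ioo (-r) r ×ˢ Metric.ball (0 : EuclideanSpace ℝ (Fin (d - 1))) r,
        |fderivWithin ℝ f
            (Set.Ioo (-r) r ×ˢ Metric.ball (0 : EuclideanSpace ℝ (Fin (d - 1))) r) q
            (1, 0)| ≤ M) →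
      (∀ q ∈ Set.Ioo (-r) r ×ˢ Metric.ball (0 : EuclideanSpace ℝ (Fin (d - 1))) r,
        ∀ i : Fin (d - 1),
          |fderivWithin ℝ f
              (Set.Ioo (-r) r ×ˢ Metric.ball (0 : EuclideanSpace ℝ (Fin (d - 1))) r) q
              (0, EuclideanSpace.single i 1)| ≤ M) →
      ‖∫ y in Metric.ball (0 : EuclideanSpace ℝ (Fin (d - 1))) r,
          ∫ x in Set.Ioo (-r) r, (f (x, y) : ℂ) / (Complex.I * (b : ℂ) - (x : ℂ))‖ ≤
        c * M :=
  statement16_general d r hr0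

end LatSch
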